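/- arXiv:1208.1474 — 2 statements merged into one kernel-verified Lean document; each statement's English description precedes it below -/
import Mathlib

section
/- For every solution γ = (x, v) : I → ℝ² × ℝ² of the Euler–Lagrange ODE of the vertical magnetic Lagrangian, the function t ↦ v₂(t) + cos(2π x₁(t)) is constant on the interval I; that is, H(x, v) = v₂ + cos(2π x₁) is a first integral of the flow (in energy–angle coordinates v = √(2E)(cos φ, sin φ) this is the first integral H(x, φ) = cos(2π x) + √(2E) sin φ of the paper). -/
open Real

/-- A solution of the Euler–Lagrange ODE of the vertical magnetic Lagrangian
`L(x,v) = ‖v‖²/2 + cos(2π x₁) v₂`, lifted to `ℝ² × ℝ²`, on a set `I ⊆ ℝ`: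
`x' = v`, `v₁' = −2π sin(2π x₁) v₂`, `v₂' = 2π sin(2π x₁) v₁`. -/
def IsELSolution (I : Set ℝ) (x v : ℝ → ℝ × ℝ) : Prop :=
  ∀ t ∈ I,
    HasDerivWithinAt x (v t) I t ∧
    HasDerivWithinAt (fun s => (v s).1)
      (-(2 * π * Real.sin (2 * π * (x t).1) * (v t).2)) I t ∧
    HasDerivWithinAt (fun s => (v s).2)
      (2 * π * Real.sin (2 * π * (x t).1) * (v t).1) I t

theorem HasDerivWithinAt.fst {𝕜 E F : Type*} [NontriviallyNormedField 𝕜]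
    [NormedAddCommGroup E] [NormedSpace 𝕜 E] [NormedAddCommGroup F] [NormedSpace 𝕜 F]
    {f : 𝕜 → E × F} {f' : E × F} {s : Set 𝕜} {t : 𝕜}
    (hf : HasDerivWithinAt f f' s t) : HasDerivWithinAt (fun u => (f u).1) f'.1 s t :=
  (ContinuousLinearMap.fst 𝕜 E F).hasFDerivAt.comp_hasDerivWithinAt t hf

theorem Convex.is_const_of_hasDerivWithinAt_zero {𝕜 E : Type*} [RCLike 𝕜]
    [NormedAddCommGroup E] [NormedSpace 𝕜 E] {f : 𝕜 → E} {s : Set 𝕜} (hs : Convex ℝ s)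
    (hf : ∀ t ∈ s, HasDerivWithinAt f 0 s t) {x y : 𝕜} (hx : x ∈ s) (hy : y ∈ s) :
    f x = f y := by
  have h := hs.norm_image_sub_le_of_norm_hasDerivWithin_le hf (fun _ _ => norm_zero.le) hx hy
  rw [zero_mul, norm_le_zero_iff, sub_eq_zero] at h
  exact h.symm

noncomputable def magneticFirstIntegral (x v : ℝ × ℝ) : ℝ :=
  v.2 + Real.cos (2 * π * x.1)

theorem IsELSolution.hasDerivWithinAt_magneticFirstIntegral {I : Set ℝ} {x v : ℝ → ℝ × ℝ}
    (hsol : IsELSolution I x v) {t : ℝ} (ht : t ∈ I) :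
    HasDerivWithinAt (fun s => magneticFirstIntegral (x s) (v s)) 0 I t := by
  obtain ⟨hx, -, hv₂⟩ := hsol t ht
  have hcos : HasDerivWithinAt (fun s => Real.cos (2 * π * (x s).1))
      (-Real.sin (2 * π * (x t).1) * (2 * π * (v t).1)) I t :=
    (Real.hasDerivAt_cos _).comp_hasDerivWithinAt t (hx.fst.const_mul (2 * π))
  -- the magnetic force term in `v₂'` cancels the derivative of `cos(2π x₁)`
  exact (hv₂.add hcos).congr_deriv (by ring)

/-- The quantity `H(x,v) = v₂ + cos(2π x₁)` is a first integral: it is constant along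
any solution of the Euler–Lagrange ODE of the vertical magnetic Lagrangian on an
interval `I`. -/
theorem first_integral_constant_along_EL_solutions
    (I : Set ℝ) (hI : I.OrdConnected) (x v : ℝ → ℝ × ℝ)
    (hsol : IsELSolution I x v) :
    ∀ s ∈ I, ∀ t ∈ I,
      (v s).2 + Real.cos (2 * π * (x s).1) = (v t).2 + Real.cos (2 * π * (x t).1) :=
  fun _ hs _ ht => hI.convex.is_const_of_hasDerivWithinAt_zero
    (fun _ hu => hsol.hasDerivWithinAt_magneticFirstIntegral hu) hs ht
end

section
/- Let E > 1/2 and let F ∈ ℝ satisfy |F| < √(2E) − 1, and define Γ⁺ = {(x, v) ∈ ℝ² × ℝ² : ‖v‖² = 2E, v₂ + cos(2π x₁) = F, and v₁ > 0}. Then Γ⁺ is invariant under the Euler–Lagrange ODE of the vertical magnetic Lagrangian: if γ : ℝ → ℝ² × ℝ² is a solution of the ODE with γ(0) ∈ Γ⁺, then γ(t) ∈ Γ⁺ for all t ∈ ℝ. The same holds for the set Γ⁻ defined with v₁ < 0 instead of v₁ > 0. -/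
/-!
Along a solution both `v₁² + v₂²` and `v₂ + cos(2π x₁)` are constant, so `(x t, v t)` stays
on the level set of `γ(0)`. On that level set `|v₂| ≤ |F| + 1 < √(2E)`, hence
`v₁² = 2E - v₂² > 0`: the continuous function `t ↦ v₁(t)` never vanishes and by the
intermediate value theorem it keeps the sign it has at `t = 0`.
-/

open Real

/-- `Γ⁺ = {(x,v) : ‖v‖² = 2E, v₂ + cos(2π x₁) = F, v₁ > 0}`. -/
def GammaPlus (E F : ℝ) : Set ((ℝ × ℝ) × (ℝ × ℝ)) :=
  {p | p.2.1 ^ 2 + p.2.2 ^ 2 = 2 * E ∧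
    p.2.2 + Real.cos (2 * π * p.1.1) = F ∧ 0 < p.2.1}

/-- `Γ⁻ = {(x,v) : ‖v‖² = 2E, v₂ + cos(2π x₁) = F, v₁ < 0}`. -/
def GammaMinus (E F : ℝ) : Set ((ℝ × ℝ) × (ℝ × ℝ)) :=
  {p | p.2.1 ^ 2 + p.2.2 ^ 2 = 2 * E ∧
    p.2.2 + Real.cos (2 * π * p.1.1) = F ∧ p.2.1 < 0}

section SignOfNonvanishing

variable {X α : Type*} [TopologicalSpace X] [PreconnectedSpace X] [LinearOrder α]
  [TopologicalSpace α] [OrderClosedTopology α] {f : X → α} {c : α}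

theorem Continuous.lt_apply_of_forall_ne (hf : Continuous f) (hne : ∀ x, f x ≠ c) {a : X}
    (ha : c < f a) (b : X) : c < f b := by
  by_contra! hb
  obtain ⟨x, hx⟩ := intermediate_value_univ₂ hf continuous_const hb ha.le
  exact hne x hx

theorem Continuous.apply_lt_of_forall_ne (hf : Continuous f) (hne : ∀ x, f x ≠ c) {a : X}
    (ha : f a < c) (b : X) : f b < c := by
  by_contra! hb
  obtain ⟨x, hx⟩ := intermediate_value_univ₂ hf continuous_const ha.le hb
  exact hne x hx

end SignOfNonvanishing

theorem eq_of_forall_hasDerivAt_zero {f : ℝ → ℝ} (hf : ∀ t, HasDerivAt f 0 t) (t s : ℝ) :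
    f t = f s :=
  is_const_of_deriv_eq_zero (fun t => (hf t).differentiableAt) (fun t => (hf t).deriv) t s

theorem ne_zero_of_sq_add_sq_eq_of_abs_lt {a b r : ℝ} (h : a ^ 2 + b ^ 2 = r) (hb : |b| < √r) :
    a ≠ 0 := by
  rintro rfl
  rw [← h, zero_pow two_ne_zero, zero_add, sqrt_sq_eq_abs] at hb
  exact hb.false

theorem abs_lt_sqrt_of_add_cos_eq {b θ F r : ℝ} (h : b + cos θ = F) (hF : |F| < √r - 1) :
    |b| < √r :=
  calc |b| = |F - cos θ| := by rw [← h, add_sub_cancel_right]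
    _ ≤ |F| + |cos θ| := abs_sub _ _
    _ ≤ |F| + 1 := by gcongr; exact abs_cos_le_one θ
    _ < √r := by linarith

namespace IsELSolution

variable {x v : ℝ → ℝ × ℝ}

theorem hasDerivAt_fst_position (hsol : IsELSolution Set.univ x v) (t : ℝ) :
    HasDerivAt (fun s => (x s).1) (v t).1 t :=
  (ContinuousLinearMap.fst ℝ ℝ ℝ).hasFDerivAt.comp_hasDerivAt t
    (hasDerivWithinAt_univ.mp (hsol t trivial).1)

theorem hasDerivAt_fst_velocity (hsol : IsELSolution Set.univ x v) (t : ℝ) :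
    HasDerivAt (fun s => (v s).1) (-(2 * π * sin (2 * π * (x t).1) * (v t).2)) t :=
  hasDerivWithinAt_univ.mp (hsol t trivial).2.1

theorem hasDerivAt_snd_velocity (hsol : IsELSolution Set.univ x v) (t : ℝ) :
    HasDerivAt (fun s => (v s).2) (2 * π * sin (2 * π * (x t).1) * (v t).1) t :=
  hasDerivWithinAt_univ.mp (hsol t trivial).2.2

theorem speed_sq_eq (hsol : IsELSolution Set.univ x v) (t : ℝ) :
    (v t).1 ^ 2 + (v t).2 ^ 2 = (v 0).1 ^ 2 + (v 0).2 ^ 2 := by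
  refine eq_of_forall_hasDerivAt_zero (f := fun s => (v s).1 ^ 2 + (v s).2 ^ 2) (fun s => ?_) t 0
  refine (((hsol.hasDerivAt_fst_velocity s).fun_pow 2).fun_add
    ((hsol.hasDerivAt_snd_velocity s).fun_pow 2)).congr_deriv ?_
  ring

theorem momentum_eq (hsol : IsELSolution Set.univ x v) (t : ℝ) :
    (v t).2 + cos (2 * π * (x t).1) = (v 0).2 + cos (2 * π * (x 0).1) := by
  refine eq_of_forall_hasDerivAt_zero (f := fun s => (v s).2 + cos (2 * π * (x s).1))
    (fun s => ?_) t 0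
  refine ((hsol.hasDerivAt_snd_velocity s).fun_add
    ((hsol.hasDerivAt_fst_position s).const_mul (2 * π)).cos).congr_deriv ?_
  ring

theorem continuous_fst_velocity (hsol : IsELSolution Set.univ x v) :
    Continuous fun s => (v s).1 :=
  continuous_iff_continuousAt.mpr fun t => (hsol.hasDerivAt_fst_velocity t).continuousAt

end IsELSolution

theorem GammaPlus_GammaMinus_invariant_general (E F : ℝ)
    (hF : |F| < Real.sqrt (2 * E) - 1) (x v : ℝ → ℝ × ℝ)
    (hsol : IsELSolution Set.univ x v) :
    ((x 0, v 0) ∈ GammaPlus E F → ∀ t : ℝ, (x t, v t) ∈ GammaPlus E F) ∧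
    ((x 0, v 0) ∈ GammaMinus E F → ∀ t : ℝ, (x t, v t) ∈ GammaMinus E F) := by
  have levels : (v 0).1 ^ 2 + (v 0).2 ^ 2 = 2 * E → (v 0).2 + cos (2 * π * (x 0).1) = F →
      ∀ t, (v t).1 ^ 2 + (v t).2 ^ 2 = 2 * E ∧ (v t).2 + cos (2 * π * (x t).1) = F ∧
        (v t).1 ≠ 0 := by
    intro hspeed hmom t
    have hspeed_t := (hsol.speed_sq_eq t).trans hspeed
    have hmom_t := (hsol.momentum_eq t).trans hmom
    exact ⟨hspeed_t, hmom_t,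
      ne_zero_of_sq_add_sq_eq_of_abs_lt hspeed_t (abs_lt_sqrt_of_add_cos_eq hmom_t hF)⟩
  constructor
  · rintro ⟨hspeed, hmom, hpos⟩ t
    obtain ⟨hspeed_t, hmom_t, -⟩ := levels hspeed hmom t
    exact ⟨hspeed_t, hmom_t, hsol.continuous_fst_velocity.lt_apply_of_forall_ne
      (fun s => (levels hspeed hmom s).2.2) hpos t⟩
  · rintro ⟨hspeed, hmom, hneg⟩ t
    obtain ⟨hspeed_t, hmom_t, -⟩ := levels hspeed hmom t
    exact ⟨hspeed_t, hmom_t, hsol.continuous_fst_velocity.apply_lt_of_forall_ne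
      (fun s => (levels hspeed hmom s).2.2) hneg t⟩

/-- For `E > 1/2` and `|F| < √(2E) − 1`, the sets `Γ⁺` and `Γ⁻` are invariant under
the Euler–Lagrange flow of the vertical magnetic Lagrangian. -/
theorem GammaPlus_GammaMinus_invariant (E F : ℝ) (hE : 1 / 2 < E)
    (hF : |F| < Real.sqrt (2 * E) - 1) (x v : ℝ → ℝ × ℝ)
    (hsol : IsELSolution Set.univ x v) :
    ((x 0, v 0) ∈ GammaPlus E F → ∀ t : ℝ, (x t, v t) ∈ GammaPlus E F) ∧
    ((x 0, v 0) ∈ GammaMinus E F → ∀ t : ℝ, (x t, v t) ∈ GammaMinus E F) :=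
  GammaPlus_GammaMinus_invariant_general E F hF x v hsol
end
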